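/- Let D be a positive integer, r ∈ ℚ, a, b ∈ ℚ, and s ∈ ℂ with Re(s) > 2. Then the functions t ↦ E_D(a,b)(r + it)·t^{s−1} and t ↦ E₁(a,b)(Dr + it)·t^{s−1} are absolutely integrable on (0,∞), and ∫_0^∞ E_D(a,b)(r + it)·t^{s−1} dt = D^{1−s} · ∫_0^∞ E₁(a,b)(Dr + it)·t^{s−1} dt, where D^{1−s} = exp((1−s)·log D) with the real logarithm. -/

import Mathlib

open MeasureTheory Real Set Function

/-- The weight-2 Eisenstein series
`E_D(a,b)(τ) = −2πiD·[ Σ_{x ∈ a+ℤ, x>0} x Σ_{m≥1} e^{2πim(Dxτ+b)}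
                      + Σ_{x ∈ −a+ℤ, x>0} x Σ_{m≥1} e^{2πim(Dxτ−b)} ]`. -/
noncomputable def Eis (D : ℕ) (a b : ℚ) (τ : ℂ) : ℂ :=
  (-2 * (Real.pi : ℂ) * Complex.I * (D : ℂ)) *
    ((∑' y : {x : ℚ // (x - a).den = 1 ∧ 0 < x}, (y.1 : ℂ) *
        ∑' m : ℕ, Complex.exp (2 * (Real.pi : ℂ) * Complex.I * ((m : ℂ) + 1) *
          ((D : ℂ) * (y.1 : ℂ) * τ + (b : ℂ)))) +
     (∑' y : {x : ℚ // (x + a).den = 1 ∧ 0 < x}, (y.1 : ℂ) *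
        ∑' m : ℕ, Complex.exp (2 * (Real.pi : ℂ) * Complex.I * ((m : ℂ) + 1) *
          ((D : ℂ) * (y.1 : ℂ) * τ - (b : ℂ)))))

noncomputable def EisW (x c t β : ℝ) : ℂ :=
  Complex.exp (2 * (π:ℂ) * Complex.I * ((x:ℂ) * ((c:ℂ) + (t:ℂ) * Complex.I) + (β:ℂ)))

lemma term_eq (x c t β : ℝ) (m : ℕ) :
    Complex.exp (2 * (π:ℂ) * Complex.I * ((m:ℂ)+1) * ((x:ℂ) * ((c:ℂ) + (t:ℂ)*Complex.I) + (β:ℂ)))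
      = EisW x c t β ^ (m+1) := by
  rw [EisW, ← Complex.exp_nat_mul]
  congr 1
  push_cast
  ring

lemma norm_EisW (x c t β : ℝ) : ‖EisW x c t β‖ = Real.exp (-(2*π*x*t)) := by
  rw [EisW, Complex.norm_exp]
  congr 1
  have h : 2 * (π:ℂ) * Complex.I * ((x:ℂ) * ((c:ℂ) + (t:ℂ)*Complex.I) + (β:ℂ))
      = ((-(2*π*x*t) : ℝ) : ℂ) + ((2*π*(x*c+β) : ℝ) : ℂ) * Complex.I := by
    push_cast
    linear_combination (2*(π:ℂ)*x*t) * Complex.I_sq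
  rw [h]
  simp

lemma norm_EisW_lt_one {x t : ℝ} (hx : 0 < x) (ht : 0 < t) (c β : ℝ) :
    ‖EisW x c t β‖ < 1 := by
  rw [norm_EisW]
  rw [Real.exp_lt_one_iff]
  have : (0:ℝ) < 2*π*x*t := by positivity
  linarith

lemma key_ineq {u : ℝ} (hu : 0 < u) : (Real.exp u - 1)⁻¹ ≤ 2 * Real.exp (-(u/2)) / u := by
  have h1 : u/2 + 1 ≤ Real.exp (u/2) := Real.add_one_le_exp _
  have h2 : Real.exp u = Real.exp (u/2) * Real.exp (u/2) := by
    rw [← Real.exp_add]; ring_nf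
  have h3 : 0 < Real.exp (u/2) := Real.exp_pos _
  have h5 : u * Real.exp (u/2) / 2 ≤ Real.exp u - 1 := by nlinarith
  calc (Real.exp u - 1)⁻¹ ≤ (u * Real.exp (u/2) / 2)⁻¹ := by
        apply inv_anti₀ (by positivity) h5
    _ = 2 * Real.exp (-(u/2)) / u := by
        rw [Real.exp_neg]
        field_simp

lemma inner_tsum_eq {x t : ℝ} (hx : 0 < x) (ht : 0 < t) (c β : ℝ) :
    (∑' m : ℕ, Complex.exp (2 * (π:ℂ) * Complex.I * ((m:ℂ)+1) *
      ((x:ℂ) * ((c:ℂ) + (t:ℂ)*Complex.I) + (β:ℂ))))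
      = EisW x c t β / (1 - EisW x c t β) := by
  have hlt := norm_EisW_lt_one hx ht c β
  simp_rw [term_eq, pow_succ]
  rw [tsum_mul_right, tsum_geometric_of_norm_lt_one hlt, div_eq_mul_inv, mul_comm]

lemma norm_term_bound {x t : ℝ} (hx : 0 < x) (ht : 0 < t) (c β : ℝ) :
    ‖((x:ℝ):ℂ) * (EisW x c t β / (1 - EisW x c t β))‖ ≤ Real.exp (-(π*x*t)) / (π*t) := by
  have hπ := Real.pi_pos
  have hu : 0 < 2*π*x*t := by positivity
  have hr : ‖EisW x c t β‖ = Real.exp (-(2*π*x*t)) := norm_EisW x c t β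
  have hlt : ‖EisW x c t β‖ < 1 := norm_EisW_lt_one hx ht c β
  have hdenpos : 0 < 1 - Real.exp (-(2*π*x*t)) := by rw [← hr]; linarith
  have hden : 1 - Real.exp (-(2*π*x*t)) ≤ ‖1 - EisW x c t β‖ := by
    calc 1 - Real.exp (-(2*π*x*t)) = ‖(1:ℂ)‖ - ‖EisW x c t β‖ := by rw [hr]; simp
      _ ≤ ‖1 - EisW x c t β‖ := norm_sub_norm_le _ _
  have h1 : ‖((x:ℝ):ℂ)‖ = x := by rw [Complex.norm_real]; exact abs_of_pos hx
  rw [norm_mul, norm_div, hr, h1]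
  have heq : Real.exp (-(2*π*x*t)) / (1 - Real.exp (-(2*π*x*t))) = (Real.exp (2*π*x*t) - 1)⁻¹ := by
    rw [Real.exp_neg]
    have h2 : 0 < Real.exp (2*π*x*t) := Real.exp_pos _
    have h3 : 0 < Real.exp (2*π*x*t) - 1 := by nlinarith [Real.add_one_le_exp (2*π*x*t)]
    rw [eq_comm, inv_eq_iff_eq_inv, eq_comm, inv_div]
    field_simp
  calc x * (Real.exp (-(2*π*x*t)) / ‖1 - EisW x c t β‖)
      ≤ x * (Real.exp (-(2*π*x*t)) / (1 - Real.exp (-(2*π*x*t)))) := by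
        gcongr
    _ = x * (Real.exp (2*π*x*t) - 1)⁻¹ := by rw [heq]
    _ ≤ x * (2 * Real.exp (-(2*π*x*t/2)) / (2*π*x*t)) := by
        exact mul_le_mul_of_nonneg_left (key_ineq hu) hx.le
    _ = Real.exp (-(π*x*t)) / (π*t) := by
        rw [show -(2*π*x*t/2) = -(π*x*t) by ring]
        field_simp

lemma rat_scaled {x w : ℚ} (h : (x - w).den = 1) (hx : 0 < x) :
    1 ≤ (x * (w.den:ℚ)).num.toNat ∧ (((x * (w.den:ℚ)).num.toNat : ℚ)) = x * w.den := by
  have hk : ((x - w).num : ℚ) = x - w := (Rat.den_eq_one_iff _).mp h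
  have hwden : (w.den:ℚ) ≠ 0 := by exact_mod_cast w.den_ne_zero
  have hnum : (w.num : ℚ) = w * w.den := by
    exact (div_eq_iff hwden).mp (Rat.num_div_den w)
  have hval : (x * (w.den:ℚ)) = (((x - w).num * w.den + w.num : ℤ) : ℚ) := by
    push_cast [hk, hnum]
    ring
  have hpos : (0:ℚ) < x * (w.den:ℚ) := by
    apply mul_pos hx
    exact_mod_cast w.pos
  have hn : (x * (w.den:ℚ)).num = (x - w).num * w.den + w.num := by
    rw [hval, Rat.num_intCast]
  have hnpos : 0 < (x - w).num * w.den + w.num := by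
    rw [hval] at hpos
    exact_mod_cast hpos
  constructor
  · rw [hn]; omega
  · have h9 : (((((x - w).num * w.den + w.num).toNat : ℤ)) : ℚ) = (((x - w).num * w.den + w.num : ℤ) : ℚ) := by
      rw [Int.toNat_of_nonneg hnpos.le]
    rw [hn, hval, ← h9]
    norm_cast


lemma tsum_pow_le {ι : Type*} (n : ι → ℕ) (hinj : Injective n) (h1 : ∀ i, 1 ≤ n i)
    {ρ : ℝ} (h0 : 0 ≤ ρ) (h1' : ρ < 1) :
    Summable (fun i => ρ ^ n i) ∧ ∑' i, ρ ^ n i ≤ ρ / (1 - ρ) := by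
  have hgeo := summable_geometric_of_lt_one h0 h1'
  have hsum : Summable (fun i => ρ ^ n i) := hgeo.comp_injective hinj
  have hsum' : Summable (fun k : ℕ => ρ ^ (k+1)) := by
    simp_rw [pow_succ]
    exact hgeo.mul_right _
  refine ⟨hsum, ?_⟩
  have hinj' : Injective (fun i => n i - 1) := by
    intro i j hij
    apply hinj
    have := h1 i; have := h1 j
    simp only at hij
    omega
  have hle : ∑' i, ρ ^ n i ≤ ∑' k : ℕ, ρ ^ (k+1) := by
    apply hsum.tsum_le_tsum_of_inj (fun i => n i - 1) hinj' (fun c _ => by positivity)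
      (fun i => ?_) hsum'
    have : n i - 1 + 1 = n i := by have := h1 i; omega
    simp only [this]
    exact le_rfl
  refine hle.trans (le_of_eq ?_)
  simp_rw [pow_succ]
  rw [tsum_mul_right, tsum_geometric_of_lt_one h0 h1', div_eq_mul_inv, mul_comm]

lemma ratio_ineq {u : ℝ} (hu : 0 < u) :
    Real.exp (-u) / (1 - Real.exp (-u)) ≤ 2 * Real.exp (-(u/2)) / u := by
  have h2 := Real.exp_pos u
  have h3 : 0 < Real.exp u - 1 := by nlinarith [Real.add_one_le_exp u]
  have heq : Real.exp (-u) / (1 - Real.exp (-u)) = (Real.exp u - 1)⁻¹ := by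
    rw [Real.exp_neg, eq_comm, inv_eq_iff_eq_inv, eq_comm, inv_div]
    field_simp
  rw [heq]
  exact key_ineq hu

lemma sum_piece {ι : Type*} (v : ι → ℚ) (n : ι → ℕ) (hvinj : Injective v) (hv : ∀ i, 0 < v i)
    {q : ℕ} (hq : 0 < q) (hn1 : ∀ i, 1 ≤ n i) (hnv : ∀ i, ((n i : ℚ)) = v i * q)
    {t : ℝ} (ht : 0 < t) (c β : ℝ) :
    ‖∑' i, (((v i : ℝ)):ℂ) * (EisW (v i) c t β / (1 - EisW (v i) c t β))‖
      ≤ 2 * q * Real.exp (-(π*t/(2*q))) / (π*t)^2 := by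
  have hπ := Real.pi_pos
  have hq' : (0:ℝ) < q := by exact_mod_cast hq
  set ρ := Real.exp (-(π*t/q)) with hρ
  have h0 : 0 ≤ ρ := Real.exp_nonneg _
  have h1' : ρ < 1 := by
    rw [hρ, Real.exp_lt_one_iff]
    have : (0:ℝ) < π*t/q := by positivity
    linarith
  have hninj : Injective n := by
    intro i j hij
    apply hvinj
    have := hnv i
    rw [hij, hnv j] at this
    have hq0 : (q:ℚ) ≠ 0 := by exact_mod_cast hq.ne'
    exact mul_right_cancel₀ hq0 this.symm
  obtain ⟨hsum, hle⟩ := tsum_pow_le n hninj hn1 h0 h1'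
  have hvn : ∀ i, ((v i : ℝ)) = (n i : ℝ) / q := by
    intro i
    have := hnv i
    have h9 : ((n i : ℝ)) = (v i : ℝ) * q := by exact_mod_cast this
    field_simp [h9]
    exact h9.symm
  have hterm : ∀ i, ‖(((v i : ℝ)):ℂ) * (EisW (v i) c t β / (1 - EisW (v i) c t β))‖
      ≤ ρ ^ n i / (π*t) := by
    intro i
    have hvi : (0:ℝ) < (v i : ℝ) := by exact_mod_cast hv i
    refine (norm_term_bound hvi ht c β).trans (le_of_eq ?_)
    congr 1
    rw [hρ, ← Real.exp_nat_mul]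
    congr 1
    rw [hvn i]
    ring
  have hsumdiv : Summable (fun i => ρ ^ n i / (π*t)) := hsum.div_const _
  have hbound := tsum_of_norm_bounded hsumdiv.hasSum hterm
  refine hbound.trans ?_
  rw [tsum_div_const]
  have hle2 : (∑' i, ρ ^ n i) / (π*t) ≤ (ρ / (1-ρ)) / (π*t) := by gcongr
  refine hle2.trans ?_
  have hu : (0:ℝ) < π*t/q := by positivity
  have := ratio_ineq hu
  calc (ρ / (1-ρ)) / (π*t) ≤ (2 * Real.exp (-(π*t/q/2)) / (π*t/q)) / (π*t) := by gcongr
    _ = 2 * q * Real.exp (-(π*t/(2*q))) / (π*t)^2 := by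
        rw [show π*t/q/2 = π*t/(2*q) by ring]
        field_simp

lemma eis_one_repr (a b : ℚ) (c t : ℝ) (ht : 0 < t) :
    Eis 1 a b ((c:ℂ) + (t:ℂ)*Complex.I) =
      (-2*(π:ℂ)*Complex.I) *
        ((∑' y : {x : ℚ // (x - a).den = 1 ∧ 0 < x},
            (((y.1 : ℝ)):ℂ) * (EisW (y.1:ℝ) c t b / (1 - EisW (y.1:ℝ) c t b))) +
         (∑' y : {x : ℚ // (x + a).den = 1 ∧ 0 < x},
            (((y.1 : ℝ)):ℂ) * (EisW (y.1:ℝ) c t (-b) / (1 - EisW (y.1:ℝ) c t (-b))))) := by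
  rw [Eis]
  have e1 : ∀ y : {x : ℚ // (x - a).den = 1 ∧ 0 < x},
      (y.1 : ℂ) * (∑' m : ℕ, Complex.exp (2 * (π:ℂ) * Complex.I * ((m:ℂ)+1) *
        (((1:ℕ):ℂ) * (y.1:ℂ) * ((c:ℂ)+(t:ℂ)*Complex.I) + (b:ℂ))))
      = (((y.1 : ℝ)):ℂ) * (EisW (y.1:ℝ) c t b / (1 - EisW (y.1:ℝ) c t b)) := by
    intro y
    have hx : (0:ℝ) < (y.1 : ℝ) := by exact_mod_cast y.2.2
    have hterm : ∀ m:ℕ, Complex.exp (2 * (π:ℂ) * Complex.I * ((m:ℂ)+1) *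
        (((1:ℕ):ℂ) * (y.1:ℂ) * ((c:ℂ)+(t:ℂ)*Complex.I) + (b:ℂ)))
        = Complex.exp (2 * (π:ℂ) * Complex.I * ((m:ℂ)+1) *
          ((((y.1:ℝ)):ℂ) * ((c:ℂ)+(t:ℂ)*Complex.I) + (((b:ℝ)):ℂ))) := by
      intro m; congr 1; push_cast; ring
    rw [tsum_congr hterm, inner_tsum_eq hx ht c (b:ℝ)]
    norm_cast
  have e2 : ∀ y : {x : ℚ // (x + a).den = 1 ∧ 0 < x},
      (y.1 : ℂ) * (∑' m : ℕ, Complex.exp (2 * (π:ℂ) * Complex.I * ((m:ℂ)+1) *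
        (((1:ℕ):ℂ) * (y.1:ℂ) * ((c:ℂ)+(t:ℂ)*Complex.I) - (b:ℂ))))
      = (((y.1 : ℝ)):ℂ) * (EisW (y.1:ℝ) c t (-b) / (1 - EisW (y.1:ℝ) c t (-b))) := by
    intro y
    have hx : (0:ℝ) < (y.1 : ℝ) := by exact_mod_cast y.2.2
    have hterm : ∀ m:ℕ, Complex.exp (2 * (π:ℂ) * Complex.I * ((m:ℂ)+1) *
        (((1:ℕ):ℂ) * (y.1:ℂ) * ((c:ℂ)+(t:ℂ)*Complex.I) - (b:ℂ)))
        = Complex.exp (2 * (π:ℂ) * Complex.I * ((m:ℂ)+1) *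
          ((((y.1:ℝ)):ℂ) * ((c:ℂ)+(t:ℂ)*Complex.I) + Complex.ofReal (-(b:ℝ)))) := by
      intro m; congr 1; push_cast; ring
    rw [tsum_congr hterm, inner_tsum_eq hx ht c (-(b:ℝ))]
    norm_cast
  rw [tsum_congr e1, tsum_congr e2]
  norm_num

lemma idx1_spec (a : ℚ) (y : {x : ℚ // (x - a).den = 1 ∧ 0 < x}) :
    1 ≤ (y.1 * (a.den:ℚ)).num.toNat ∧ (((y.1 * (a.den:ℚ)).num.toNat : ℚ)) = y.1 * a.den :=
  rat_scaled y.2.1 y.2.2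

lemma idx2_spec (a : ℚ) (y : {x : ℚ // (x + a).den = 1 ∧ 0 < x}) :
    1 ≤ (y.1 * (a.den:ℚ)).num.toNat ∧ (((y.1 * (a.den:ℚ)).num.toNat : ℚ)) = y.1 * a.den := by
  have h : (y.1 - (-a)).den = 1 := by rw [sub_neg_eq_add]; exact y.2.1
  have := rat_scaled h y.2.2
  rwa [Rat.neg_den] at this

lemma eis_one_bound (a b : ℚ) (c : ℝ) {t : ℝ} (ht : 0 < t) :
    ‖Eis 1 a b ((c:ℂ) + (t:ℂ)*Complex.I)‖
      ≤ 8 * a.den * Real.exp (-(π*t/(2*a.den))) / (π*t^2) := by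
  have hπ := Real.pi_pos
  have hq : 0 < a.den := a.pos
  rw [eis_one_repr a b c t ht]
  have h1 := sum_piece (fun y : {x : ℚ // (x - a).den = 1 ∧ 0 < x} => y.1)
    (fun y => (y.1 * (a.den:ℚ)).num.toNat) (fun i j hij => Subtype.ext hij)
    (fun y => y.2.2) hq (fun y => (idx1_spec a y).1) (fun y => (idx1_spec a y).2) ht c (b:ℝ)
  have h2 := sum_piece (fun y : {x : ℚ // (x + a).den = 1 ∧ 0 < x} => y.1)
    (fun y => (y.1 * (a.den:ℚ)).num.toNat) (fun i j hij => Subtype.ext hij)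
    (fun y => y.2.2) hq (fun y => (idx2_spec a y).1) (fun y => (idx2_spec a y).2) ht c (-(b:ℝ))
  have hnorm : ‖(-2*(π:ℂ)*Complex.I)‖ = 2*π := by
    simp [abs_of_pos hπ]
  rw [norm_mul, hnorm]
  calc 2*π * ‖_ + _‖ ≤ 2*π * (2 * a.den * Real.exp (-(π*t/(2*a.den))) / (π*t)^2
        + 2 * a.den * Real.exp (-(π*t/(2*a.den))) / (π*t)^2) := by
        apply mul_le_mul_of_nonneg_left _ (by positivity)
        exact (norm_add_le _ _).trans (add_le_add h1 h2)
    _ = 8 * a.den * Real.exp (-(π*t/(2*a.den))) / (π*t^2) := by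
        field_simp
        ring

lemma sum_piece_cont {ι : Type*} (v : ι → ℚ) (n : ι → ℕ) (hvinj : Injective v)
    (hv : ∀ i, 0 < v i) {q : ℕ} (hq : 0 < q) (hn1 : ∀ i, 1 ≤ n i)
    (hnv : ∀ i, ((n i : ℚ)) = v i * q) {t₁ : ℝ} (ht₁ : 0 < t₁) (c β : ℝ) :
    ContinuousOn (fun t : ℝ =>
      ∑' i, (((v i : ℝ)):ℂ) * (EisW (v i) c t β / (1 - EisW (v i) c t β))) (Ici t₁) := by
  have hπ := Real.pi_pos
  have hq' : (0:ℝ) < q := by exact_mod_cast hq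
  set ρ := Real.exp (-(π*t₁/q)) with hρ
  have h0 : 0 ≤ ρ := Real.exp_nonneg _
  have h1' : ρ < 1 := by
    rw [hρ, Real.exp_lt_one_iff]
    have : (0:ℝ) < π*t₁/q := by positivity
    linarith
  have hninj : Injective n := by
    intro i j hij
    apply hvinj
    have := hnv i
    rw [hij, hnv j] at this
    have hq0 : (q:ℚ) ≠ 0 := by exact_mod_cast hq.ne'
    exact mul_right_cancel₀ hq0 this.symm
  have hsum : Summable (fun i => ρ ^ n i / (π*t₁)) :=
    (tsum_pow_le n hninj hn1 h0 h1').1.div_const _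
  have hvn : ∀ i, ((v i : ℝ)) = (n i : ℝ) / q := by
    intro i
    have h9 : ((n i : ℝ)) = (v i : ℝ) * q := by exact_mod_cast hnv i
    field_simp [h9]
    exact h9.symm
  apply continuousOn_tsum (u := fun i => ρ ^ n i / (π*t₁)) _ hsum
  · intro i t htmem
    have hvi : (0:ℝ) < (v i : ℝ) := by exact_mod_cast hv i
    have ht : 0 < t := lt_of_lt_of_le ht₁ htmem
    refine (norm_term_bound hvi ht c β).trans ?_
    have hexp : Real.exp (-(π*(v i : ℝ)*t)) ≤ ρ ^ n i := by
      have : ρ ^ n i = Real.exp (-(π*(v i : ℝ)*t₁)) := by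
        rw [hρ, ← Real.exp_nat_mul]
        congr 1
        rw [hvn i]
        ring
      rw [this]
      apply Real.exp_le_exp.mpr
      have : π * (v i : ℝ) * t₁ ≤ π * (v i : ℝ) * t := by
        apply mul_le_mul_of_nonneg_left (le_trans le_rfl htmem) (by positivity)
      linarith
    calc Real.exp (-(π*(v i : ℝ)*t)) / (π*t) ≤ ρ ^ n i / (π*t) := by gcongr
      _ ≤ ρ ^ n i / (π*t₁) := by
          gcongr
          exact htmem
  · intro i
    have hvi : (0:ℝ) < (v i : ℝ) := by exact_mod_cast hv i
    have hWcont : Continuous (fun t : ℝ => EisW (v i : ℝ) c t β) := by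
      apply Complex.continuous_exp.comp
      fun_prop
    apply ContinuousOn.mul continuousOn_const
    apply ContinuousOn.div hWcont.continuousOn (continuousOn_const.sub hWcont.continuousOn)
    intro t htmem
    have ht : 0 < t := lt_of_lt_of_le ht₁ htmem
    have hlt := norm_EisW_lt_one hvi ht c β
    intro hzero
    rw [Pi.sub_apply, sub_eq_zero] at hzero
    rw [← hzero] at hlt
    simp at hlt

lemma eis_one_cont (a b : ℚ) (c : ℝ) :
    ContinuousOn (fun t : ℝ => Eis 1 a b ((c:ℂ) + (t:ℂ)*Complex.I)) (Set.Ioi 0) := by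
  intro t₀ ht₀
  have ht₀' : (0:ℝ) < t₀ := ht₀
  have hmem : Set.Ici (t₀/2) ∈ nhds t₀ := Ici_mem_nhds (by linarith)
  have hq : 0 < a.den := a.pos
  have hG1 := sum_piece_cont (fun y : {x : ℚ // (x - a).den = 1 ∧ 0 < x} => y.1)
    (fun y => (y.1 * (a.den:ℚ)).num.toNat) (fun i j hij => Subtype.ext hij)
    (fun y => y.2.2) hq (fun y => (idx1_spec a y).1) (fun y => (idx1_spec a y).2)
    (by linarith : (0:ℝ) < t₀/2) c (b:ℝ)
  have hG2 := sum_piece_cont (fun y : {x : ℚ // (x + a).den = 1 ∧ 0 < x} => y.1)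
    (fun y => (y.1 * (a.den:ℚ)).num.toNat) (fun i j hij => Subtype.ext hij)
    (fun y => y.2.2) hq (fun y => (idx2_spec a y).1) (fun y => (idx2_spec a y).2)
    (by linarith : (0:ℝ) < t₀/2) c (-(b:ℝ))
  have hGcont : ContinuousOn (fun t : ℝ => (-2*(π:ℂ)*Complex.I) *
      ((∑' y : {x : ℚ // (x - a).den = 1 ∧ 0 < x},
          (((y.1 : ℝ)):ℂ) * (EisW (y.1:ℝ) c t b / (1 - EisW (y.1:ℝ) c t b))) +
       (∑' y : {x : ℚ // (x + a).den = 1 ∧ 0 < x},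
          (((y.1 : ℝ)):ℂ) * (EisW (y.1:ℝ) c t (-b) / (1 - EisW (y.1:ℝ) c t (-b))))))
      (Set.Ici (t₀/2)) :=
    continuousOn_const.mul (hG1.add hG2)
  have hCA : ContinuousAt (fun t : ℝ => (-2*(π:ℂ)*Complex.I) *
      ((∑' y : {x : ℚ // (x - a).den = 1 ∧ 0 < x},
          (((y.1 : ℝ)):ℂ) * (EisW (y.1:ℝ) c t b / (1 - EisW (y.1:ℝ) c t b))) +
       (∑' y : {x : ℚ // (x + a).den = 1 ∧ 0 < x},
          (((y.1 : ℝ)):ℂ) * (EisW (y.1:ℝ) c t (-b) / (1 - EisW (y.1:ℝ) c t (-b)))))) t₀ :=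
    hGcont.continuousAt hmem
  have hEq : (fun t : ℝ => Eis 1 a b ((c:ℂ) + (t:ℂ)*Complex.I)) =ᶠ[nhds t₀]
      (fun t : ℝ => (-2*(π:ℂ)*Complex.I) *
      ((∑' y : {x : ℚ // (x - a).den = 1 ∧ 0 < x},
          (((y.1 : ℝ)):ℂ) * (EisW (y.1:ℝ) c t b / (1 - EisW (y.1:ℝ) c t b))) +
       (∑' y : {x : ℚ // (x + a).den = 1 ∧ 0 < x},
          (((y.1 : ℝ)):ℂ) * (EisW (y.1:ℝ) c t (-b) / (1 - EisW (y.1:ℝ) c t (-b)))))) := by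
    filter_upwards [isOpen_Ioi.mem_nhds ht₀] with t ht
    exact eis_one_repr a b c t ht
  exact (hCA.congr hEq.symm).continuousWithinAt

lemma dom_integrable {ε : ℝ} (hε : 0 < ε) {σ : ℝ} (hσ : 2 < σ) :
    IntegrableOn (fun t : ℝ => Real.exp (-(ε*t)) * t ^ (σ-3)) (Set.Ioi 0) := by
  have h1 : IntegrableOn (fun x : ℝ => Real.exp (-x) * x ^ (σ-3)) (Set.Ioi 0) := by
    have := Real.GammaIntegral_convergent (show 0 < σ-2 by linarith)
    simpa [show σ-2-1 = σ-3 by ring] using this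
  have h2 : IntegrableOn (fun t : ℝ => Real.exp (-(ε*t)) * (ε*t) ^ (σ-3)) (Set.Ioi 0) := by
    have := (integrableOn_Ioi_comp_mul_left_iff
      (fun x : ℝ => Real.exp (-x) * x ^ (σ-3)) 0 hε).mpr (by rwa [mul_zero])
    simpa using this
  have h3 := h2.const_mul ((ε ^ (σ-3))⁻¹)
  refine IntegrableOn.congr_fun h3 (fun t ht => ?_) measurableSet_Ioi
  have ht' : (0:ℝ) < t := ht
  have hεne : ε ^ (σ-3) ≠ 0 := (Real.rpow_pos_of_pos hε _).ne'
  rw [Real.mul_rpow hε.le ht'.le]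
  field_simp

lemma explog_cont (s : ℂ) :
    ContinuousOn (fun t : ℝ => Complex.exp ((s - 1) * (Real.log t : ℂ))) (Set.Ioi 0) := by
  apply Complex.continuous_exp.comp_continuousOn
  apply ContinuousOn.mul continuousOn_const
  apply Complex.continuous_ofReal.comp_continuousOn
  exact Real.continuousOn_log.mono (fun x hx => ne_of_gt hx)

lemma norm_explog {t : ℝ} (ht : 0 < t) (s : ℂ) :
    ‖Complex.exp ((s - 1) * (Real.log t : ℂ))‖ = t ^ (s.re - 1) := by
  rw [Complex.norm_exp]
  have hre : ((s - 1) * (Real.log t : ℂ)).re = (s.re - 1) * Real.log t := by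
    simp [Complex.mul_re]
  rw [hre, Real.rpow_def_of_pos ht, mul_comm]

lemma eis_one_integrable (a b : ℚ) (c : ℝ) {s : ℂ} (hs : 2 < s.re) :
    IntegrableOn (fun t : ℝ => Eis 1 a b ((c:ℂ) + (t:ℂ)*Complex.I) *
      Complex.exp ((s - 1) * (Real.log t : ℂ))) (Set.Ioi 0) := by
  have hπ := Real.pi_pos
  have hq : 0 < a.den := a.pos
  have hq' : (0:ℝ) < a.den := by exact_mod_cast hq
  have hε : (0:ℝ) < π/(2*a.den) := by positivity
  have hmeas : AEStronglyMeasurable (fun t : ℝ => Eis 1 a b ((c:ℂ) + (t:ℂ)*Complex.I) *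
      Complex.exp ((s - 1) * (Real.log t : ℂ))) (volume.restrict (Set.Ioi 0)) :=
    ((eis_one_cont a b c).mul (explog_cont s)).aestronglyMeasurable measurableSet_Ioi
  have hdom := (dom_integrable hε hs).const_mul (8*(a.den:ℝ)/π)
  apply Integrable.mono' hdom hmeas
  rw [ae_restrict_iff' measurableSet_Ioi]
  apply ae_of_all
  intro t ht
  have ht' : (0:ℝ) < t := ht
  rw [norm_mul, norm_explog ht' s]
  calc ‖Eis 1 a b ((c:ℂ) + (t:ℂ)*Complex.I)‖ * t ^ (s.re - 1)
      ≤ (8 * a.den * Real.exp (-(π*t/(2*a.den))) / (π*t^2)) * t ^ (s.re - 1) := by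
        apply mul_le_mul_of_nonneg_right (eis_one_bound a b c ht')
          (Real.rpow_nonneg ht'.le _)
    _ = 8*(a.den:ℝ)/π * (Real.exp (-(π/(2*a.den)*t)) * t ^ (s.re-3)) := by
        have hsplit : t ^ (s.re - 1) = t ^ (s.re - 3) * t^2 := by
          rw [← Real.rpow_natCast t 2, ← Real.rpow_add ht']
          congr 1
          push_cast
          ring
        rw [hsplit, show -(π*t/(2*a.den)) = -(π/(2*a.den)*t) by ring]
        field_simp

lemma eis_scale (D : ℕ) (a b : ℚ) (τ : ℂ) : Eis D a b τ = (D:ℂ) * Eis 1 a b ((D:ℂ) * τ) := by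
  rw [Eis, Eis]
  have e1 : ∀ y : {x : ℚ // (x - a).den = 1 ∧ 0 < x},
      (y.1 : ℂ) * (∑' m : ℕ, Complex.exp (2 * (π:ℂ) * Complex.I * ((m:ℂ)+1) *
        (((1:ℕ):ℂ) * (y.1:ℂ) * ((D:ℂ) * τ) + (b:ℂ))))
      = (y.1 : ℂ) * (∑' m : ℕ, Complex.exp (2 * (π:ℂ) * Complex.I * ((m:ℂ)+1) *
        ((D:ℂ) * (y.1:ℂ) * τ + (b:ℂ)))) := by
    intro y
    congr 1
    exact tsum_congr (fun m => by congr 1; push_cast; ring)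
  have e2 : ∀ y : {x : ℚ // (x + a).den = 1 ∧ 0 < x},
      (y.1 : ℂ) * (∑' m : ℕ, Complex.exp (2 * (π:ℂ) * Complex.I * ((m:ℂ)+1) *
        (((1:ℕ):ℂ) * (y.1:ℂ) * ((D:ℂ) * τ) - (b:ℂ))))
      = (y.1 : ℂ) * (∑' m : ℕ, Complex.exp (2 * (π:ℂ) * Complex.I * ((m:ℂ)+1) *
        ((D:ℂ) * (y.1:ℂ) * τ - (b:ℂ)))) := by
    intro y
    congr 1
    exact tsum_congr (fun m => by congr 1; push_cast; ring)
  rw [tsum_congr e1, tsum_congr e2]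
  push_cast
  ring


set_option maxHeartbeats 1000000 in
/-- Let `D ≥ 1`, `r, a, b ∈ ℚ` and `s ∈ ℂ` with `Re(s) > 2`. Then the
functions `t ↦ E_D(a,b)(r+it)·t^{s−1}` and `t ↦ E₁(a,b)(Dr+it)·t^{s−1}` are absolutely
integrable on `(0,∞)` and
`∫_0^∞ E_D(a,b)(r+it)·t^{s−1} dt = D^{1−s} ∫_0^∞ E₁(a,b)(Dr+it)·t^{s−1} dt`,
where `t^{s−1} = exp((s−1)·log t)` and `D^{1−s} = exp((1−s)·log D)` with the real log. -/
theorem stmt12 (D : ℕ) (hD : 0 < D) (r a b : ℚ) (s : ℂ) (hs : 2 < s.re) :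
    IntegrableOn (fun t : ℝ =>
      Eis D a b ((r : ℂ) + (t : ℂ) * Complex.I) *
        Complex.exp ((s - 1) * (Real.log t : ℂ))) (Set.Ioi 0) ∧
    IntegrableOn (fun t : ℝ =>
      Eis 1 a b ((((D : ℚ) * r : ℚ) : ℂ) + (t : ℂ) * Complex.I) *
        Complex.exp ((s - 1) * (Real.log t : ℂ))) (Set.Ioi 0) ∧
    (∫ t in Set.Ioi (0 : ℝ),
        Eis D a b ((r : ℂ) + (t : ℂ) * Complex.I) *
          Complex.exp ((s - 1) * (Real.log t : ℂ)))
      = Complex.exp ((1 - s) * (Real.log (D : ℝ) : ℂ)) *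
        ∫ t in Set.Ioi (0 : ℝ),
          Eis 1 a b ((((D : ℚ) * r : ℚ) : ℂ) + (t : ℂ) * Complex.I) *
            Complex.exp ((s - 1) * (Real.log t : ℂ)) := by
  have hπ := Real.pi_pos
  have hD' : (0:ℝ) < (D:ℝ) := by exact_mod_cast hD
  set F : ℝ → ℂ := fun u => Eis 1 a b ((((D : ℚ) * r : ℚ) : ℂ) + (u : ℂ) * Complex.I) *
    Complex.exp ((s - 1) * (Real.log u : ℂ)) with hFdef
  have hFint : IntegrableOn F (Set.Ioi 0) := by
    have h0 := eis_one_integrable a b ((((D : ℚ) * r : ℚ) : ℝ)) hs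
    rwa [Complex.ofReal_ratCast] at h0
  set L : ℂ := (Real.log (D:ℝ) : ℂ) with hLdef
  set C : ℂ := (D:ℂ) * Complex.exp ((1 - s) * L) with hCdef
  have hpt : ∀ t ∈ Set.Ioi (0:ℝ),
      Eis D a b ((r : ℂ) + (t : ℂ) * Complex.I) * Complex.exp ((s - 1) * (Real.log t : ℂ))
        = C * F ((D:ℝ) * t) := by
    intro t ht
    have ht' : (0:ℝ) < t := ht
    rw [hFdef]
    simp only
    rw [eis_scale D a b ((r:ℂ) + (t:ℂ)*Complex.I)]
    have harg : (D:ℂ) * ((r:ℂ) + (t:ℂ)*Complex.I)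
        = ((((D:ℚ)*r : ℚ)):ℂ) + (((D:ℝ)*t : ℝ):ℂ)*Complex.I := by push_cast; ring
    rw [harg]
    have hlog : Real.log ((D:ℝ)*t) = Real.log (D:ℝ) + Real.log t :=
      Real.log_mul hD'.ne' ht'.ne'
    rw [hlog]
    set E : ℂ := Eis 1 a b (((((D:ℚ)*r : ℚ)):ℂ) + (((D:ℝ)*t : ℝ):ℂ)*Complex.I) with hEdef
    have hsplit : ((Real.log (D:ℝ) + Real.log t : ℝ):ℂ) = L + (Real.log t : ℂ) := by
      rw [hLdef]; push_cast; ring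
    rw [hsplit]
    have hdist : (s - 1) * (L + (Real.log t : ℂ))
        = (s-1) * L + (s-1) * (Real.log t : ℂ) := by ring
    rw [hdist, Complex.exp_add]
    have hcancel : Complex.exp ((1-s)*L) * Complex.exp ((s-1)*L) = 1 := by
      rw [← Complex.exp_add, show (1-s)*L + (s-1)*L = 0 by ring, Complex.exp_zero]
    rw [hCdef]
    linear_combination (-(D:ℂ) * E * Complex.exp ((s-1) * (Real.log t : ℂ))) * hcancel
  have hcomp : IntegrableOn (fun t : ℝ => F ((D:ℝ)*t)) (Set.Ioi 0) := by
    apply (integrableOn_Ioi_comp_mul_left_iff F 0 hD').mpr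
    rwa [mul_zero]
  have h1 : IntegrableOn (fun t : ℝ =>
      Eis D a b ((r : ℂ) + (t : ℂ) * Complex.I) *
        Complex.exp ((s - 1) * (Real.log t : ℂ))) (Set.Ioi 0) := by
    apply IntegrableOn.congr_fun (hcomp.const_mul C) _ measurableSet_Ioi
    intro t ht
    exact (hpt t ht).symm
  refine ⟨h1, hFint, ?_⟩
  rw [setIntegral_congr_fun measurableSet_Ioi hpt]
  rw [MeasureTheory.integral_const_mul]
  rw [integral_comp_mul_left_Ioi F 0 hD', mul_zero]
  rw [Complex.real_smul, Complex.ofReal_inv]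
  rw [hCdef]
  have hcast : ((D:ℝ):ℂ) = (D:ℂ) := by push_cast; rfl
  rw [hcast]
  have hDne' : (D:ℂ) ≠ 0 := by
    simp only [ne_eq, Nat.cast_eq_zero]
    exact hD.ne'
  have hinv : (D:ℂ) * ((D:ℂ))⁻¹ = 1 := mul_inv_cancel₀ hDne'
  linear_combination (Complex.exp ((1-s)*L) * (∫ x in Set.Ioi (0:ℝ), F x)) * hinv
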